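/- For a > 0, T > 0, define B = e^{a²} Φ(T − 2a). If β ∈ (3/4, 1), T = √(2 log d), a = x₁√(log d) with 1/√2 < x₁ ≤ √2 and x₁ < √2(1 − √(1−β)), then d^{1−2β}·B → 0 as d → ∞. -/

import Mathlib

/-!
For `d` large, `z = √(2 log d) - 2 x₁ √(log d) = -(2 x₁ - √2) √(log d)` is at most `-1`, since
`x₁ > 1/√2`. There the Gaussian tail obeys `Φ(z) ≤ exp (-z²/2)`, which turns `B` into at most
`d ^ (1 - (√2 - x₁)²)`, so `d ^ (1 - 2β) B ≤ d ^ (2(1 - β) - (√2 - x₁)²)`. The condition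
`x₁ < √2 (1 - √(1 - β))` makes this exponent negative.
-/

open Filter Real MeasureTheory

noncomputable def stdNormalCDF (z : ℝ) : ℝ :=
  ∫ t in Set.Iic z, (Real.sqrt (2 * π))⁻¹ * Real.exp (-t^2 / 2)

lemma integrable_stdGaussianPDF :
    Integrable (fun t : ℝ => (√(2 * π))⁻¹ * exp (-t ^ 2 / 2)) := by
  convert (integrable_exp_neg_mul_sq (by norm_num : (0 : ℝ) < 1 / 2)).const_mul (√(2 * π))⁻¹
    using 2 with t
  ring_nf

lemma stdNormalCDF_nonneg (z : ℝ) : 0 ≤ stdNormalCDF z :=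
  setIntegral_nonneg measurableSet_Iic fun _ _ => by positivity

/-- The density lies below the line of slope one through `(z, -z²/2)` in the exponent: for
`t ≤ z ≤ -1`, `z² - t² = (z - t)(z + t) ≤ -2 (z - t)`. -/
lemma stdGaussianPDF_le_exp_tangent {z t : ℝ} (hz : z ≤ -1) (ht : t ≤ z) :
    (√(2 * π))⁻¹ * exp (-t ^ 2 / 2) ≤ exp (-z ^ 2 / 2 - z) * exp t := by
  have hsqrt : 1 ≤ √(2 * π) := by
    rw [show (1 : ℝ) = √1 by simp]
    exact sqrt_le_sqrt (by linarith [pi_gt_three])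
  calc (√(2 * π))⁻¹ * exp (-t ^ 2 / 2) ≤ 1 * exp (-t ^ 2 / 2) :=
        mul_le_mul_of_nonneg_right (inv_le_one_of_one_le₀ hsqrt) (exp_nonneg _)
    _ ≤ exp (-z ^ 2 / 2 - z + t) := by
        rw [one_mul, exp_le_exp]
        nlinarith [mul_nonneg (by linarith : (0 : ℝ) ≤ -z - 1) (by linarith : (0 : ℝ) ≤ z - t)]
    _ = exp (-z ^ 2 / 2 - z) * exp t := exp_add _ _

lemma stdNormalCDF_le_exp {z : ℝ} (hz : z ≤ -1) : stdNormalCDF z ≤ exp (-z ^ 2 / 2) :=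
  calc stdNormalCDF z ≤ ∫ t in Set.Iic z, exp (-z ^ 2 / 2 - z) * exp t :=
        setIntegral_mono_on integrable_stdGaussianPDF.integrableOn
          ((integrableOn_exp_Iic z).const_mul _) measurableSet_Iic
          fun _ ht => stdGaussianPDF_le_exp_tangent hz ht
    _ = exp (-z ^ 2 / 2) := by
        rw [integral_const_mul, integral_exp_Iic, ← exp_add]
        ring_nf

lemma exp_sq_mul_stdNormalCDF_le {a L : ℝ} (h : 1 ≤ (2 * a - √2) * L) :
    exp ((a * L) ^ 2) * stdNormalCDF (√2 * L - 2 * (a * L)) ≤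
      exp ((1 - (√2 - a) ^ 2) * L ^ 2) := by
  have hsq : √2 ^ 2 = 2 := sq_sqrt (by norm_num)
  calc exp ((a * L) ^ 2) * stdNormalCDF (√2 * L - 2 * (a * L))
      ≤ exp ((a * L) ^ 2) * exp (-(√2 * L - 2 * (a * L)) ^ 2 / 2) :=
        mul_le_mul_of_nonneg_left (stdNormalCDF_le_exp (by linarith)) (exp_nonneg _)
    _ = exp ((1 - (√2 - a) ^ 2) * L ^ 2) := by
        rw [← exp_add]
        congr 1
        linear_combination (L ^ 2 / 2) * hsq

lemma sqrt_two_lt_two_mul {x : ℝ} (hx : (√2)⁻¹ < x) : √2 < 2 * x := by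
  have := mul_lt_mul_of_pos_right ((inv_lt_iff_one_lt_mul₀ (sqrt_pos.mpr two_pos)).mp hx)
    (sqrt_pos.mpr two_pos)
  rwa [one_mul, mul_assoc, mul_self_sqrt zero_le_two, mul_comm] at this

lemma two_mul_one_sub_lt_sq_sqrt_two_sub {β x₁ : ℝ} (hx₁ : x₁ < √2 * (1 - √(1 - β))) :
    2 * (1 - β) < (√2 - x₁) ^ 2 := by
  rcases le_or_gt β 1 with hβ | hβ
  · have hgap : √2 * √(1 - β) < √2 - x₁ := by linarith
    have hroot : (√2 * √(1 - β)) ^ 2 = 2 * (1 - β) := by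
      rw [mul_pow, sq_sqrt (by norm_num), sq_sqrt (by linarith)]
    nlinarith [mul_nonneg (sqrt_nonneg 2) (sqrt_nonneg (1 - β))]
  · nlinarith [sq_nonneg (√2 - x₁)]

lemma eventually_one_le_mul_sqrt_log {k : ℝ} (hk : 0 < k) :
    ∀ᶠ d : ℕ in atTop, 1 ≤ k * √(log d) :=
  ((tendsto_sqrt_atTop.comp (tendsto_log_atTop.comp tendsto_natCast_atTop_atTop)).const_mul_atTop
    hk).eventually_ge_atTop 1

theorem stmt_16_general (β x₁ : ℝ)
    (hx₁l : (Real.sqrt 2)⁻¹ < x₁)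
    (hx₁ : x₁ < Real.sqrt 2 * (1 - Real.sqrt (1 - β))) :
    Tendsto (fun d : ℕ =>
        (d : ℝ)^(1 - 2*β) *
          (Real.exp ((x₁ * Real.sqrt (Real.log d))^2) *
            stdNormalCDF (Real.sqrt (2 * Real.log d) - 2 * (x₁ * Real.sqrt (Real.log d)))))
      atTop (nhds 0) := by
  have hk : 0 < 2 * x₁ - √2 := sub_pos.mpr (sqrt_two_lt_two_mul hx₁l)
  have hlim : Tendsto (fun d : ℕ => (d : ℝ) ^ (2 * (1 - β) - (√2 - x₁) ^ 2)) atTop (nhds 0) := by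
    have hexp := sub_neg.mpr (two_mul_one_sub_lt_sq_sqrt_two_sub hx₁)
    simpa [Function.comp_def] using
      (tendsto_rpow_neg_atTop (neg_pos.mpr hexp)).comp tendsto_natCast_atTop_atTop
  refine squeeze_zero' (Eventually.of_forall fun d => ?_) ?_ hlim
  · have := stdNormalCDF_nonneg (√(2 * log d) - 2 * (x₁ * √(log d)))
    positivity
  filter_upwards [eventually_one_le_mul_sqrt_log hk, eventually_gt_atTop 0] with d hd hd0
  have hdpos : (0 : ℝ) < d := Nat.cast_pos.mpr hd0
  calc (d : ℝ) ^ (1 - 2 * β) * (exp ((x₁ * √(log d)) ^ 2) *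
        stdNormalCDF (√(2 * log d) - 2 * (x₁ * √(log d))))
      ≤ (d : ℝ) ^ (1 - 2 * β) * exp ((1 - (√2 - x₁) ^ 2) * √(log d) ^ 2) := by
        rw [sqrt_mul zero_le_two]
        exact mul_le_mul_of_nonneg_left (exp_sq_mul_stdNormalCDF_le hd) (by positivity)
    _ = (d : ℝ) ^ (2 * (1 - β) - (√2 - x₁) ^ 2) := by
        rw [sq_sqrt (log_natCast_nonneg d), mul_comm _ (log _), ← rpow_def_of_pos hdpos,
          ← rpow_add hdpos]
        congr 1
        ring

theorem stmt_16 (β x₁ : ℝ) (hβ : β ∈ Set.Ioo (3/4 : ℝ) 1)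
    (hx₁l : (Real.sqrt 2)⁻¹ < x₁) (hx₁u : x₁ ≤ Real.sqrt 2)
    (hx₁ : x₁ < Real.sqrt 2 * (1 - Real.sqrt (1 - β))) :
    Tendsto (fun d : ℕ =>
        (d : ℝ)^(1 - 2*β) *
          (Real.exp ((x₁ * Real.sqrt (Real.log d))^2) *
            stdNormalCDF (Real.sqrt (2 * Real.log d) - 2 * (x₁ * Real.sqrt (Real.log d)))))
      atTop (nhds 0) :=
  stmt_16_general β x₁ hx₁l hx₁
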